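/- Let G be a finite connected simple triangle-free graph with n ≥ 2 vertices and m edges, and let χ be an integer. If m ≤ 2(n − χ), then the bondage number satisfies b(G) ≤ 7 − 8χ/n, i.e. n·(b(G) + 1) ≤ 8(n − χ). -/

import Mathlib

/-!
In every graph without isolated vertices some two vertices `u ≠ v` at distance at most `2`
satisfy `n (deg u + deg v) ≤ 4m`, and deleting suitable `deg u + deg v - 1` edges at `u` and `v`
raises the domination number. Hence `n (b(G) + 1) ≤ 4m ≤ 8 (n - χ)`.
-/

/-- A finset `D` of vertices is a dominating set of `G` if every vertex not in `D`
is adjacent to some vertex in `D`. -/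
def SimpleGraph.IsDominatingSet {V : Type*} (G : SimpleGraph V) (D : Finset V) : Prop :=
  ∀ v : V, v ∉ D → ∃ u ∈ D, G.Adj u v

/-- The domination number of `G`: the minimum cardinality of a dominating set. -/
noncomputable def SimpleGraph.dominationNumber {V : Type*} [Fintype V]
    (G : SimpleGraph V) : ℕ :=
  sInf {k | ∃ D : Finset V, G.IsDominatingSet D ∧ D.card = k}

/-- The bondage number of `G`: the minimum cardinality of a set `B` of edges of `G`
whose removal increases the domination number. -/
noncomputable def SimpleGraph.bondageNumber {V : Type*} [Fintype V]
    (G : SimpleGraph V) : ℕ :=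
  sInf {k | ∃ B : Finset (Sym2 V), ↑B ⊆ G.edgeSet ∧ B.card = k ∧
    G.dominationNumber < (G.deleteEdges ↑B).dominationNumber}

namespace SimpleGraph

open Finset

variable {V : Type*}

section Domination

variable {G H : SimpleGraph V} {D : Finset V} {u v w : V}

theorem IsDominatingSet.mem_of_isIsolated (hD : G.IsDominatingSet D) (hu : G.IsIsolated u) :
    u ∈ D := by
  by_contra hu'
  obtain ⟨x, -, hxu⟩ := hD u hu'
  exact hu x hxu.symm

theorem IsDominatingSet.erase_of_isIsolated [DecidableEq V] (hD : H.IsDominatingSet D)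
    (hHG : H ≤ G) (hu : H.IsIsolated u) (hw : w ∈ D) (hwu : G.Adj w u) :
    G.IsDominatingSet (D.erase u) := by
  intro x hx
  by_cases hxu : x = u
  · exact ⟨w, mem_erase.2 ⟨hwu.ne, hw⟩, hxu ▸ hwu⟩
  obtain ⟨y, hy, hyx⟩ := hD x fun hxD ↦ hx (mem_erase.2 ⟨hxu, hxD⟩)
  have hyu : y ≠ u := by
    rintro rfl
    exact hu x hyx
  exact ⟨y, mem_erase.2 ⟨hyu, hy⟩, hHG hyx⟩

theorem IsDominatingSet.insert_erase_of_forall_adj_eq [DecidableEq V] (hD : G.IsDominatingSet D)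
    (hvw : G.Adj v w) (hv : ∀ x, G.Adj v x → x = w) :
    G.IsDominatingSet (insert w (D.erase v)) := by
  intro x hx
  rw [mem_insert, mem_erase, not_or, not_and_or, not_not] at hx
  obtain ⟨hxw, hxv | hxD⟩ := hx
  · exact ⟨w, mem_insert_self _ _, hxv ▸ hvw.symm⟩
  obtain ⟨y, hy, hyx⟩ := hD x hxD
  have hyv : y ≠ v := by
    rintro rfl
    exact hxw (hv x hyx)
  exact ⟨y, mem_insert_of_mem (mem_erase.2 ⟨hyv, hy⟩), hyx⟩

variable [Fintype V]

theorem exists_isDominatingSet_card_eq_dominationNumber (G : SimpleGraph V) :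
    ∃ D, G.IsDominatingSet D ∧ D.card = G.dominationNumber :=
  Nat.sInf_mem (s := {k | ∃ D : Finset V, G.IsDominatingSet D ∧ D.card = k})
    ⟨_, univ, fun v hv ↦ absurd (mem_univ v) hv, rfl⟩

theorem IsDominatingSet.dominationNumber_le_card (hD : G.IsDominatingSet D) :
    G.dominationNumber ≤ D.card :=
  Nat.sInf_le ⟨D, hD, rfl⟩

theorem dominationNumber_lt_of_forall_exists_card_lt
    (h : ∀ D, H.IsDominatingSet D → ∃ D', G.IsDominatingSet D' ∧ D'.card < D.card) :
    G.dominationNumber < H.dominationNumber := by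
  obtain ⟨D, hD, hcard⟩ := H.exists_isDominatingSet_card_eq_dominationNumber
  obtain ⟨D', hD', hlt⟩ := h D hD
  exact hcard ▸ hD'.dominationNumber_le_card.trans_lt hlt

theorem bondageNumber_le_card {B : Finset (Sym2 V)} (hB : ↑B ⊆ G.edgeSet)
    (h : ∀ D, (G.deleteEdges ↑B).IsDominatingSet D →
      ∃ D', G.IsDominatingSet D' ∧ D'.card < D.card) :
    G.bondageNumber ≤ B.card :=
  Nat.sInf_le ⟨B, hB, rfl, dominationNumber_lt_of_forall_exists_card_lt h⟩

end Domination

section DeleteEdges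

variable {G : SimpleGraph V} {s : Set (Sym2 V)} {v w : V}

theorem isIsolated_deleteEdges_of_incidenceSet_subset (hs : G.incidenceSet v ⊆ s) :
    (G.deleteEdges s).IsIsolated v := fun _ hvx ↦
  (deleteEdges_adj.1 hvx).2 (hs (G.mk'_mem_incidenceSet_left_iff.2 (deleteEdges_adj.1 hvx).1))

theorem eq_of_deleteEdges_adj_of_incidenceSet_diff_subset (hs : G.incidenceSet v \ {s(v, w)} ⊆ s)
    {x : V} (hvx : (G.deleteEdges s).Adj v x) : x = w := by
  obtain ⟨hvx, hvx'⟩ := deleteEdges_adj.1 hvx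
  by_contra hxw
  refine hvx' (hs ⟨G.mk'_mem_incidenceSet_left_iff.2 hvx, ?_⟩)
  rw [Set.mem_singleton_iff, Sym2.congr_right]
  exact hxw

end DeleteEdges

section Bondage

variable [Fintype V] {G : SimpleGraph V} [DecidableRel G.Adj] {u v w : V}

/-- Delete all edges at `u` and `v`: both become isolated, so every dominating set of the
remaining graph contains them, and dropping `v` still dominates `G`. -/
theorem bondageNumber_add_one_le_of_adj (huv : G.Adj u v) :
    G.bondageNumber + 1 ≤ G.degree u + G.degree v := by
  classical
  set B := G.incidenceFinset u ∪ G.incidenceFinset v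
  have hBu : G.incidenceSet u ⊆ ↑B := by simp [B, coe_incidenceFinset]
  have hBv : G.incidenceSet v ⊆ ↑B := by simp [B, coe_incidenceFinset]
  have hB : ↑B ⊆ G.edgeSet := by
    simp only [B, coe_union, coe_incidenceFinset]
    exact Set.union_subset (G.incidenceSet_subset u) (G.incidenceSet_subset v)
  have hcard : B.card + 1 ≤ G.degree u + G.degree v := by
    have huv_mem : s(u, v) ∈ G.incidenceFinset u ∩ G.incidenceFinset v := by
      simp [mem_incidenceFinset, G.mk'_mem_incidenceSet_left_iff.2 huv,
        G.mk'_mem_incidenceSet_right_iff.2 huv]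
    rw [← G.card_incidenceFinset_eq_degree u, ← G.card_incidenceFinset_eq_degree v,
      ← card_union_add_card_inter]
    exact Nat.add_le_add_left (card_pos.2 ⟨_, huv_mem⟩) _
  refine (Nat.add_le_add_right (bondageNumber_le_card hB fun D hD ↦ ?_) 1).trans hcard
  have hu := hD.mem_of_isIsolated (isIsolated_deleteEdges_of_incidenceSet_subset hBu)
  have hv := hD.mem_of_isIsolated (isIsolated_deleteEdges_of_incidenceSet_subset hBv)
  refine ⟨D.erase v, hD.erase_of_isIsolated (G.deleteEdges_le _)
    (isIsolated_deleteEdges_of_incidenceSet_subset hBv) hu huv, ?_⟩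
  exact card_erase_lt_of_mem hv

/-- Delete all edges at `u` and all edges at `v` except `vw`: then `u` is isolated and `v` is a
leaf at `w`, so after trading `v` for `w` every dominating set of the remaining graph contains
`u` and `w`, and dropping `u` still dominates `G`. -/
theorem bondageNumber_add_one_le_of_adj_of_adj (huv : u ≠ v) (huw : G.Adj u w)
    (hwv : G.Adj w v) : G.bondageNumber + 1 ≤ G.degree u + G.degree v := by
  classical
  set B := G.incidenceFinset u ∪ (G.incidenceFinset v).erase s(v, w)
  have hvw_mem : s(v, w) ∈ G.incidenceFinset v := by
    simpa [mem_incidenceFinset] using hwv.symm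
  have hBu : G.incidenceSet u ⊆ ↑B := by simp [B, coe_incidenceFinset]
  have hBv : G.incidenceSet v \ {s(v, w)} ⊆ ↑B := by
    intro e he
    simp [B, coe_incidenceFinset, he.1, he.2]
  have hB : ↑B ⊆ G.edgeSet := by
    simp only [B, coe_union, coe_erase, coe_incidenceFinset]
    exact Set.union_subset (G.incidenceSet_subset u)
      (Set.sdiff_subset.trans (G.incidenceSet_subset v))
  have hcard : B.card + 1 ≤ G.degree u + G.degree v := by
    have hunion : B.card ≤ G.degree u + (G.degree v - 1) := by
      refine (card_union_le _ _).trans_eq ?_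
      rw [card_erase_of_mem hvw_mem, G.card_incidenceFinset_eq_degree,
        G.card_incidenceFinset_eq_degree]
    have := hwv.degree_pos_right
    omega
  refine (Nat.add_le_add_right (bondageNumber_le_card hB fun D hD ↦ ?_) 1).trans hcard
  set H := G.deleteEdges ↑B
  have hu_iso : H.IsIsolated u := isIsolated_deleteEdges_of_incidenceSet_subset hBu
  have hv_leaf : ∀ x, H.Adj v x → x = w := fun x ↦
    eq_of_deleteEdges_adj_of_incidenceSet_diff_subset hBv
  have hu := hD.mem_of_isIsolated hu_iso
  obtain ⟨D₁, hD₁, hcard₁, hu₁, hw₁⟩ :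
      ∃ D₁, H.IsDominatingSet D₁ ∧ D₁.card ≤ D.card ∧ u ∈ D₁ ∧ w ∈ D₁ := by
    by_cases hw : w ∈ D
    · exact ⟨D, hD, le_rfl, hu, hw⟩
    have hv : v ∈ D := by
      by_contra hv
      obtain ⟨x, hx, hxv⟩ := hD v hv
      exact hw (hv_leaf x hxv.symm ▸ hx)
    have hvw : H.Adj v w := by
      simp [H, B, hwv.symm, mk'_mem_incidenceSet_iff, huv, huw.ne]
    refine ⟨_, hD.insert_erase_of_forall_adj_eq hvw hv_leaf, ?_, ?_, mem_insert_self _ _⟩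
    · rw [card_insert_of_notMem (fun h ↦ hw (mem_of_mem_erase h)), card_erase_of_mem hv]
      have := card_pos.2 ⟨_, hv⟩
      omega
    · exact mem_insert_of_mem (mem_erase.2 ⟨huv, hu⟩)
  exact ⟨D₁.erase u, hD₁.erase_of_isIsolated (G.deleteEdges_le _) hu_iso hw₁ huw.symm,
    (card_erase_lt_of_mem hu₁).trans_le hcard₁⟩

end Bondage

section Counting

variable [Fintype V] {G : SimpleGraph V}

/-- If `f` has nonpositive total, the vertices with `f ≤ 0` cannot be pairwise at distance at
least `3`: otherwise their closed neighbourhoods are disjoint, `f` sums to at least `1` on each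
of them (every neighbour `x` of such a `v` has `f x ≥ 1 - f v`) and is positive elsewhere. -/
theorem exists_ne_adj_or_adj_adj_add_nonpos [Nonempty V] (hG : ∀ v, ¬ G.IsIsolated v)
    (f : V → ℤ) (hf : ∑ v, f v ≤ 0) :
    ∃ u v, u ≠ v ∧ (G.Adj u v ∨ ∃ w, G.Adj u w ∧ G.Adj w v) ∧ f u + f v ≤ 0 := by
  classical
  by_contra! hclose
  set L := univ.filter fun v ↦ f v ≤ 0
  set N : V → Finset V := fun v ↦ insert v (G.neighborFinset v)
  have hL : L.Nonempty := by
    obtain ⟨v, -, hv⟩ := exists_le_of_sum_le univ_nonempty (hf.trans_eq (sum_const_zero).symm)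
    exact ⟨v, mem_filter.2 ⟨mem_univ v, hv⟩⟩
  have hdisj : (L : Set V).PairwiseDisjoint N := by
    intro a ha b hb hab
    rw [Function.onFun, Finset.disjoint_left]
    intro x hxa hxb
    have hab' : G.Adj a b ∨ ∃ w, G.Adj a w ∧ G.Adj w b := by
      simp only [N, mem_insert, mem_neighborFinset] at hxa hxb
      rcases hxa with rfl | hax <;> rcases hxb with rfl | hbx
      · exact absurd rfl hab
      · exact Or.inl hbx.symm
      · exact Or.inl hax
      · exact Or.inr ⟨x, hax, hbx.symm⟩
    have hfab := hclose a b hab hab'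
    have hfa := (mem_filter.1 ha).2
    have hfb := (mem_filter.1 hb).2
    omega
  have hlocal : ∀ v ∈ L, 1 ≤ ∑ x ∈ N v, f x := by
    intro v hv
    have hfv : f v ≤ 0 := (mem_filter.1 hv).2
    have hnbr : ∀ x ∈ G.neighborFinset v, 1 - f v ≤ f x := fun x hx ↦ by
      have := hclose v x (G.ne_of_adj ((mem_neighborFinset _ _ _).1 hx))
        (Or.inl ((mem_neighborFinset _ _ _).1 hx))
      omega
    have hdeg : 1 ≤ (G.neighborFinset v).card :=
      card_pos.2 ((G.neighborFinset_nonempty v).2 (hG v))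
    calc 1 ≤ f v + (G.neighborFinset v).card * (1 - f v) := by nlinarith
      _ ≤ f v + ∑ x ∈ G.neighborFinset v, f x := by
          gcongr
          simpa using card_nsmul_le_sum _ _ _ hnbr
      _ = ∑ x ∈ N v, f x := (sum_insert (notMem_neighborFinset_self _ _)).symm
  have hout : ∀ x ∉ L.biUnion N, 0 ≤ f x := fun x hx ↦ by
    have hxL : x ∉ L := fun hxL ↦ hx (mem_biUnion.2 ⟨x, hxL, mem_insert_self _ _⟩)
    simp only [L, mem_filter, mem_univ, true_and, not_le] at hxL
    exact hxL.le
  have : (0 : ℤ) < 0 := calc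
    0 < (L.card : ℤ) := by exact_mod_cast hL.card_pos
    _ ≤ ∑ v ∈ L, ∑ x ∈ N v, f x := by simpa using card_nsmul_le_sum L _ 1 hlocal
    _ = ∑ x ∈ L.biUnion N, f x := (sum_biUnion hdisj).symm
    _ ≤ ∑ x, f x := sum_le_sum_of_subset_of_nonneg (subset_univ _) fun x _ hx ↦ hout x hx
    _ ≤ 0 := hf
  exact lt_irrefl _ this

theorem exists_ne_adj_or_adj_adj_card_mul_degree_add_le [Nonempty V] [DecidableRel G.Adj]
    (hG : ∀ v, ¬ G.IsIsolated v) :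
    ∃ u v, u ≠ v ∧ (G.Adj u v ∨ ∃ w, G.Adj u w ∧ G.Adj w v) ∧
      Fintype.card V * (G.degree u + G.degree v) ≤ 4 * #G.edgeFinset := by
  have hsum : ∑ v, ((Fintype.card V : ℤ) * G.degree v - 2 * #G.edgeFinset) = 0 := by
    rw [sum_sub_distrib, ← mul_sum, ← Nat.cast_sum, sum_degrees_eq_twice_card_edges, sum_const,
      card_univ]
    push_cast
    ring
  obtain ⟨u, v, huv, hclose, hle⟩ := exists_ne_adj_or_adj_adj_add_nonpos hG _ hsum.le
  refine ⟨u, v, huv, hclose, ?_⟩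
  zify
  linarith

end Counting

end SimpleGraph

theorem stmt_13_general {V : Type*} [Fintype V] (G : SimpleGraph V)
    [DecidableRel G.Adj] (hconn : G.Connected)
    (hn : 2 ≤ Fintype.card V) (χ : ℤ)
    (hm : (G.edgeFinset.card : ℤ) ≤ 2 * ((Fintype.card V : ℤ) - χ)) :
    (Fintype.card V : ℤ) * (G.bondageNumber + 1) ≤ 8 * ((Fintype.card V : ℤ) - χ) := by
  have : Nontrivial V := Fintype.one_lt_card_iff_nontrivial.1 hn
  have : Nonempty V := hconn.nonempty
  obtain ⟨u, v, huv, hclose, hdeg⟩ :=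
    G.exists_ne_adj_or_adj_adj_card_mul_degree_add_le hconn.preconnected.not_isIsolated
  have hb : G.bondageNumber + 1 ≤ G.degree u + G.degree v := by
    rcases hclose with huv' | ⟨w, huw, hwv⟩
    · exact SimpleGraph.bondageNumber_add_one_le_of_adj huv'
    · exact SimpleGraph.bondageNumber_add_one_le_of_adj_of_adj huv huw hwv
  have hbm : Fintype.card V * (G.bondageNumber + 1) ≤ 4 * G.edgeFinset.card :=
    (Nat.mul_le_mul_left _ hb).trans hdeg
  zify at hbm
  linarith

theorem stmt_13 {V : Type*} [Fintype V] [DecidableEq V] (G : SimpleGraph V)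
    [DecidableRel G.Adj] (hconn : G.Connected) (htf : G.CliqueFree 3)
    (hn : 2 ≤ Fintype.card V) (χ : ℤ)
    (hm : (G.edgeFinset.card : ℤ) ≤ 2 * ((Fintype.card V : ℤ) - χ)) :
    (Fintype.card V : ℤ) * (G.bondageNumber + 1) ≤ 8 * ((Fintype.card V : ℤ) - χ) :=
  stmt_13_general G hconn hn χ hm
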